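/- Let T be a real random variable with E[T^2] finite and let R = T^2/(1 + (T^2 - 1)/k) for an integer k ≥ 2. If T has a t-distribution with k-1 degrees of freedom and k > 9 (so that T has finite eighth moment), then |E[(R - 1)^2] - 2| ≤ K/k for a constant K independent of k. -/

import Mathlib

/-!
Write `ν = k - 1`, `x = T²` and `R = x / (1 + (x - 1) / k)`. Then `R - 1 = ν (x - 1) / (ν + x)`,
so `0 ≤ (x - 1)² - (R - 1)² ≤ 2 (x³ + x) / ν`, and `E[(R - 1)²]` is within
`2 (E T⁶ + E T²) / ν = O(1/k)` of `E[(T² - 1)²]`. Integrating by parts against the Student density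
gives `(ν - n - 2) E T^(n+2) = (n + 1) ν E T^n`; hence `E T² = ν / (ν - 2)`,
`E T⁴ = 3ν² / ((ν - 2)(ν - 4))` and `E[(T² - 1)²] = 2 + (14ν - 8) / ((ν - 2)(ν - 4)) = 2 + O(1/k)`.
The normalisation `E T⁰ = 1` is taken from the hypothesis that `T` has this density.
-/

open MeasureTheory ProbabilityTheory Real

/-- Density of the Student t-distribution with `ν` degrees of freedom. -/
noncomputable def studentPdf (ν : ℝ) (t : ℝ) : ℝ :=
  Gamma ((ν + 1) / 2) / (Real.sqrt (ν * π) * Gamma (ν / 2)) *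
    (1 + t ^ 2 / ν) ^ (-(ν + 1) / 2)

/-- A real random variable has the t-distribution with `ν` degrees of freedom. -/
def HasStudentTDist {Ω : Type*} [MeasureSpace Ω] (T : Ω → ℝ) (ν : ℝ) : Prop :=
  Measure.map T (ℙ : Measure Ω) =
    volume.withDensity (fun t => ENNReal.ofReal (studentPdf ν t))

section Kernel

variable {ν : ℝ}

lemma one_add_abs_sq_le (hν : 0 < ν) (t : ℝ) :
    (1 + |t|) ^ 2 ≤ 2 * max 1 ν * (1 + t ^ 2 / ν) := by
  have h1 : (1 + |t|) ^ 2 ≤ 2 * (1 + t ^ 2) := by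
    nlinarith [sq_nonneg (|t| - 1), sq_abs t]
  have h2 : 1 + t ^ 2 ≤ max 1 ν * (1 + t ^ 2 / ν) := by
    have hM : 1 ≤ max 1 ν / ν := by rw [le_div_iff₀ hν]; simp
    have : max 1 ν * (1 + t ^ 2 / ν) = max 1 ν + max 1 ν / ν * t ^ 2 := by ring
    rw [this]
    nlinarith [le_max_left 1 ν, sq_nonneg t]
  linarith

lemma abs_pow_mul_rpow_le (hν : 0 < ν) (n : ℕ) {r : ℝ} (hr : 0 ≤ r) (t : ℝ) :
    |t ^ n * (1 + t ^ 2 / ν) ^ (-r)| ≤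
      (2 * max 1 ν) ^ r * (1 + |t|) ^ (-(2 * r - n)) := by
  have hM : 0 < 2 * max 1 ν := by positivity
  have hb : 0 < 1 + t ^ 2 / ν := by positivity
  have h1t : 0 < 1 + |t| := by positivity
  have hkernel : (1 + t ^ 2 / ν) ^ (-r) ≤ (2 * max 1 ν) ^ r * (1 + |t|) ^ (-(2 * r)) := by
    calc (1 + t ^ 2 / ν) ^ (-r) ≤ ((1 + |t|) ^ 2 / (2 * max 1 ν)) ^ (-r) :=
          rpow_le_rpow_of_nonpos (by positivity)
            ((div_le_iff₀' hM).2 (one_add_abs_sq_le hν t)) (neg_nonpos.2 hr)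
      _ = (2 * max 1 ν) ^ r * (1 + |t|) ^ (-(2 * r)) := by
          rw [div_rpow (by positivity) hM.le, ← rpow_natCast, ← rpow_mul h1t.le, rpow_neg hM.le,
            div_eq_mul_inv, inv_inv, mul_comm]
          push_cast; ring_nf
  rw [abs_mul, abs_pow, abs_of_pos (rpow_pos_of_pos hb _)]
  calc |t| ^ n * (1 + t ^ 2 / ν) ^ (-r)
      ≤ (1 + |t|) ^ n * ((2 * max 1 ν) ^ r * (1 + |t|) ^ (-(2 * r))) :=
        mul_le_mul (pow_le_pow_left₀ (abs_nonneg t) (by linarith) n) hkernel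
          (by positivity) (by positivity)
    _ = (2 * max 1 ν) ^ r * (1 + |t|) ^ (-(2 * r - n)) := by
        rw [← rpow_natCast (1 + |t|) n, mul_left_comm, ← rpow_add h1t]
        ring_nf

lemma integrable_pow_mul_rpow (hν : 0 < ν) {n : ℕ} {r : ℝ} (h : n + 1 < 2 * r) :
    Integrable (fun t : ℝ => t ^ n * (1 + t ^ 2 / ν) ^ (-r)) := by
  have hr : 0 ≤ r := by linarith [(n.cast_nonneg : (0 : ℝ) ≤ n)]
  have hdecay : Integrable (fun t : ℝ => (2 * max 1 ν) ^ r * (1 + ‖t‖) ^ (-(2 * r - n))) :=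
    (integrable_one_add_norm (by simp; linarith)).const_mul _
  refine hdecay.mono' (by fun_prop) (ae_of_all _ fun t => ?_)
  simpa only [Real.norm_eq_abs] using abs_pow_mul_rpow_le hν n hr t

lemma hasDerivAt_pow_mul_rpow (hν : 0 < ν) (n : ℕ) (r t : ℝ) :
    HasDerivAt (fun t : ℝ => t ^ (n + 1) * (1 + t ^ 2 / ν) ^ (-r))
      ((n + 1) * (t ^ n * (1 + t ^ 2 / ν) ^ (-r))
        - 2 * r / ν * (t ^ (n + 2) * (1 + t ^ 2 / ν) ^ (-(r + 1)))) t := by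
  have hb : 1 + t ^ 2 / ν ≠ 0 := by positivity
  have hinner : HasDerivAt (fun t : ℝ => 1 + t ^ 2 / ν) (2 * t / ν) t := by
    simpa using ((hasDerivAt_pow 2 t).div_const ν).const_add 1
  refine ((hasDerivAt_pow (n + 1) t).mul (hinner.rpow_const (p := -r) (Or.inl hb))).congr_deriv ?_
  rw [show -(r + 1) = -r - 1 by ring]
  push_cast
  ring

/-- Integration by parts against `t ^ (n + 1) * (1 + t ^ 2 / ν) ^ (1 - s)`. -/
lemma integral_pow_mul_rpow_recursion (hν : 0 < ν) {n : ℕ} {s : ℝ} (h : n + 4 < 2 * s) :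
    (2 * s - n - 3) * ∫ t, t ^ (n + 2) * (1 + t ^ 2 / ν) ^ (-s) =
      (n + 1) * ν * ∫ t, t ^ n * (1 + t ^ 2 / ν) ^ (-s) := by
  have hA : Integrable (fun t : ℝ => t ^ n * (1 + t ^ 2 / ν) ^ (-s)) :=
    integrable_pow_mul_rpow hν (by linarith)
  have hB : Integrable (fun t : ℝ => t ^ (n + 2) * (1 + t ^ 2 / ν) ^ (-s)) :=
    integrable_pow_mul_rpow hν (by push_cast; linarith)
  have hderiv : ∀ t, HasDerivAt (fun t : ℝ => t ^ (n + 1) * (1 + t ^ 2 / ν) ^ (-(s - 1)))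
      ((n + 1) * (t ^ n * (1 + t ^ 2 / ν) ^ (-s))
        + (n + 3 - 2 * s) / ν * (t ^ (n + 2) * (1 + t ^ 2 / ν) ^ (-s))) t := by
    intro t
    convert hasDerivAt_pow_mul_rpow hν n (s - 1) t using 1
    have hb : 0 < 1 + t ^ 2 / ν := by positivity
    rw [show -(s - 1) = 1 + -s by ring, rpow_add hb, rpow_one, sub_add_cancel]
    field_simp
    ring
  have hzero := integral_eq_zero_of_hasDerivAt_of_integrable hderiv
    ((hA.const_mul _).add (hB.const_mul _))
    (integrable_pow_mul_rpow hν (by push_cast; linarith))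
  rw [integral_add (hA.const_mul _) (hB.const_mul _), integral_const_mul,
    integral_const_mul] at hzero
  generalize ∫ t, t ^ n * (1 + t ^ 2 / ν) ^ (-s) = A at hzero ⊢
  generalize ∫ t, t ^ (n + 2) * (1 + t ^ 2 / ν) ^ (-s) = B at hzero ⊢
  field_simp at hzero
  linear_combination -hzero

end Kernel

section StudentPdf

variable {ν : ℝ}

lemma studentPdf_pos (hν : 0 < ν) (t : ℝ) : 0 < studentPdf ν t := by
  have := Gamma_pos_of_pos (show 0 < (ν + 1) / 2 by positivity)
  have := Gamma_pos_of_pos (show 0 < ν / 2 by positivity)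
  unfold studentPdf
  positivity

lemma measurable_studentPdf : Measurable (studentPdf ν) := by
  unfold studentPdf
  fun_prop

lemma pow_mul_studentPdf (n : ℕ) (t : ℝ) :
    t ^ n * studentPdf ν t = Gamma ((ν + 1) / 2) / (Real.sqrt (ν * π) * Gamma (ν / 2)) *
      (t ^ n * (1 + t ^ 2 / ν) ^ (-((ν + 1) / 2))) := by
  rw [studentPdf, neg_div]
  ring

lemma integrable_pow_mul_studentPdf (hν : 0 < ν) {n : ℕ} (h : n < ν) :
    Integrable (fun t => t ^ n * studentPdf ν t) := by
  simp_rw [pow_mul_studentPdf]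
  exact (integrable_pow_mul_rpow hν (by linarith)).const_mul _

lemma integrable_studentPdf (hν : 0 < ν) : Integrable (studentPdf ν) := by
  simpa using integrable_pow_mul_studentPdf hν (n := 0) (by simpa)

lemma integral_pow_mul_studentPdf_recursion (hν : 0 < ν) {n : ℕ} (h : n + 3 < ν) :
    (ν - n - 2) * ∫ t, t ^ (n + 2) * studentPdf ν t =
      (n + 1) * ν * ∫ t, t ^ n * studentPdf ν t := by
  simp_rw [pow_mul_studentPdf, integral_const_mul]
  have := integral_pow_mul_rpow_recursion hν (n := n) (s := (ν + 1) / 2) (by linarith)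
  rw [show 2 * ((ν + 1) / 2) - n - 3 = ν - n - 2 by ring] at this
  linear_combination Gamma ((ν + 1) / 2) / (Real.sqrt (ν * π) * Gamma (ν / 2)) * this

variable (h0 : ∫ t, studentPdf ν t = 1)
include h0

lemma integral_sq_mul_studentPdf (hν : 3 < ν) :
    ∫ t, t ^ 2 * studentPdf ν t = ν / (ν - 2) := by
  have := integral_pow_mul_studentPdf_recursion (by linarith) (n := 0) (by simpa)
  simp only [pow_zero, one_mul, h0, CharP.cast_eq_zero, zero_add] at this
  rw [eq_div_iff (by linarith)]
  linarith

lemma integral_pow_four_mul_studentPdf (hν : 5 < ν) :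
    ∫ t, t ^ 4 * studentPdf ν t = 3 * ν ^ 2 / ((ν - 2) * (ν - 4)) := by
  have hrec := integral_pow_mul_studentPdf_recursion (by linarith) (n := 2) (by norm_num; linarith)
  rw [integral_sq_mul_studentPdf h0 (by linarith)] at hrec
  have : ν - 2 ≠ 0 := by linarith
  have : ν - 4 ≠ 0 := by linarith
  norm_num at hrec
  field_simp at hrec ⊢
  linear_combination hrec

lemma integral_pow_six_mul_studentPdf (hν : 7 < ν) :
    ∫ t, t ^ 6 * studentPdf ν t = 15 * ν ^ 3 / ((ν - 2) * (ν - 4) * (ν - 6)) := by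
  have hrec := integral_pow_mul_studentPdf_recursion (by linarith) (n := 4) (by norm_num; linarith)
  rw [integral_pow_four_mul_studentPdf h0 (by linarith)] at hrec
  have : ν - 2 ≠ 0 := by linarith
  have : ν - 4 ≠ 0 := by linarith
  have : ν - 6 ≠ 0 := by linarith
  norm_num at hrec
  field_simp at hrec ⊢
  linear_combination hrec

end StudentPdf

section Moments

variable {ν : ℝ}

lemma sq_sub_one_sq_mul_studentPdf (t : ℝ) :
    (t ^ 2 - 1) ^ 2 * studentPdf ν t =
      t ^ 4 * studentPdf ν t - 2 * (t ^ 2 * studentPdf ν t) + studentPdf ν t := by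
  ring

lemma integrable_sq_sub_one_sq_mul_studentPdf (hν : 4 < ν) :
    Integrable (fun t => (t ^ 2 - 1) ^ 2 * studentPdf ν t) := by
  have hpos : 0 < ν := by linarith
  simp_rw [sq_sub_one_sq_mul_studentPdf]
  exact ((integrable_pow_mul_studentPdf hpos (by norm_num; linarith)).sub
    ((integrable_pow_mul_studentPdf hpos (by norm_num; linarith)).const_mul 2)).add
    (integrable_studentPdf hpos)

lemma integral_sq_sub_one_sq_mul_studentPdf (h0 : ∫ t, studentPdf ν t = 1) (hν : 5 < ν) :
    ∫ t, (t ^ 2 - 1) ^ 2 * studentPdf ν t = 2 + (14 * ν - 8) / ((ν - 2) * (ν - 4)) := by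
  have hpos : 0 < ν := by linarith
  have h2 := integrable_pow_mul_studentPdf hpos (n := 2) (by norm_num; linarith)
  have h4 := integrable_pow_mul_studentPdf hpos (n := 4) (by norm_num; linarith)
  have h42 : Integrable (fun t => t ^ 4 * studentPdf ν t - 2 * (t ^ 2 * studentPdf ν t)) :=
    h4.sub (h2.const_mul 2)
  simp_rw [sq_sub_one_sq_mul_studentPdf]
  rw [integral_add h42 (integrable_studentPdf hpos),
    integral_sub h4 (h2.const_mul 2), integral_const_mul, h0,
    integral_pow_four_mul_studentPdf h0 hν, integral_sq_mul_studentPdf h0 (by linarith)]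
  have : ν - 2 ≠ 0 := by linarith
  have : ν - 4 ≠ 0 := by linarith
  field_simp
  ring

end Moments

section HasStudentTDist

variable {Ω : Type*} [MeasureSpace Ω] {T : Ω → ℝ} {ν : ℝ}

lemma HasStudentTDist.aemeasurable (hν : 0 < ν) (h : HasStudentTDist T ν) :
    AEMeasurable T ℙ := by
  by_contra hT
  rw [HasStudentTDist, Measure.map_of_not_aemeasurable hT, eq_comm,
    withDensity_eq_zero_iff measurable_studentPdf.ennreal_ofReal.aemeasurable] at h
  obtain ⟨t, ht⟩ := h.exists
  exact (ENNReal.ofReal_pos.2 (studentPdf_pos hν t)).ne' ht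

lemma HasStudentTDist.integral_comp (hν : 0 < ν) (h : HasStudentTDist T ν) {g : ℝ → ℝ}
    (hg : Measurable g) : ∫ ω, g (T ω) = ∫ t, g t * studentPdf ν t := by
  rw [← integral_map (h.aemeasurable hν) hg.aestronglyMeasurable, h,
    integral_withDensity_eq_integral_toReal_smul measurable_studentPdf.ennreal_ofReal
      (ae_of_all _ fun _ => ENNReal.ofReal_lt_top)]
  congr with t
  rw [ENNReal.toReal_ofReal (studentPdf_pos hν t).le, smul_eq_mul, mul_comm]

lemma HasStudentTDist.integral_studentPdf [IsProbabilityMeasure (ℙ : Measure Ω)] (hν : 0 < ν)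
    (h : HasStudentTDist T ν) : ∫ t, studentPdf ν t = 1 := by
  simpa using (h.integral_comp hν (g := fun _ => 1) measurable_const).symm

end HasStudentTDist

/-- The statistic `(C̄ⁿ)² / V̄ⁿ` of Lemma 3 as a function of `x = t²`, where `t ~ t_{k-1}`. -/
noncomputable def corrStat (k x : ℝ) : ℝ := x / (1 + (x - 1) / k)

section CorrStat

variable {k x : ℝ}

lemma corrStat_sub_one (hk : 1 < k) (hx : 0 ≤ x) :
    corrStat k x - 1 = (k - 1) * (x - 1) / (k - 1 + x) := by
  have : k - 1 + x ≠ 0 := by linarith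
  have : k ≠ 0 := by linarith
  have : 1 + (x - 1) / k = (k - 1 + x) / k := by field_simp; ring
  rw [corrStat, this]
  field_simp
  ring

lemma sub_one_sq_sub_corrStat_sub_one_sq (hk : 1 < k) (hx : 0 ≤ x) :
    (x - 1) ^ 2 - (corrStat k x - 1) ^ 2 = x * (x - 1) ^ 2 * (2 * (k - 1) + x) / (k - 1 + x) ^ 2 := by
  have : k - 1 + x ≠ 0 := by linarith
  rw [corrStat_sub_one hk hx]
  field_simp
  ring

lemma corrStat_sub_one_sq_le (hk : 1 < k) (hx : 0 ≤ x) :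
    (corrStat k x - 1) ^ 2 ≤ (x - 1) ^ 2 := by
  have := sub_one_sq_sub_corrStat_sub_one_sq hk hx
  have : 0 ≤ x * (x - 1) ^ 2 * (2 * (k - 1) + x) / (k - 1 + x) ^ 2 := by
    apply div_nonneg _ (sq_nonneg _)
    apply mul_nonneg (mul_nonneg hx (sq_nonneg _))
    linarith
  linarith

lemma sub_one_sq_sub_corrStat_sub_one_sq_le (hk : 1 < k) (hx : 0 ≤ x) :
    (x - 1) ^ 2 - (corrStat k x - 1) ^ 2 ≤ 2 * (x ^ 3 + x) / (k - 1) := by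
  have hν : 0 < k - 1 := by linarith
  rw [sub_one_sq_sub_corrStat_sub_one_sq hk hx, div_le_div_iff₀ (by positivity) hν]
  have hfactor : (2 * (k - 1) + x) * (k - 1) ≤ 2 * (k - 1 + x) ^ 2 := by nlinarith
  have hcubic : x * (x - 1) ^ 2 ≤ x ^ 3 + x := by nlinarith
  calc x * (x - 1) ^ 2 * (2 * (k - 1) + x) * (k - 1)
      ≤ (x ^ 3 + x) * (2 * (k - 1 + x) ^ 2) := by
        rw [mul_assoc]
        exact mul_le_mul hcubic hfactor (by positivity) (by positivity)
    _ = 2 * (x ^ 3 + x) * (k - 1 + x) ^ 2 := by ring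

end CorrStat

section CorrStatIntegral

variable {k : ℝ}

lemma integrable_corrStat_sub_one_sq_mul_studentPdf (hk : 5 < k) :
    Integrable (fun t => (corrStat k (t ^ 2) - 1) ^ 2 * studentPdf (k - 1) t) := by
  have hpos : 0 < k - 1 := by linarith
  have hmeas : Measurable fun t => (corrStat k (t ^ 2) - 1) ^ 2 := by
    unfold corrStat
    fun_prop
  refine (integrable_sq_sub_one_sq_mul_studentPdf (ν := k - 1) (by linarith)).mono'
    (hmeas.mul measurable_studentPdf).aestronglyMeasurable (ae_of_all _ fun t => ?_)
  rw [Real.norm_eq_abs, abs_of_nonneg (mul_nonneg (sq_nonneg _) (studentPdf_pos hpos t).le)]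
  exact mul_le_mul_of_nonneg_right (corrStat_sub_one_sq_le (by linarith) (sq_nonneg t))
    (studentPdf_pos hpos t).le

lemma integral_corrStat_sub_one_sq_mul_studentPdf_le (hk : 5 < k) :
    ∫ t, (corrStat k (t ^ 2) - 1) ^ 2 * studentPdf (k - 1) t ≤
      ∫ t, (t ^ 2 - 1) ^ 2 * studentPdf (k - 1) t :=
  integral_mono (integrable_corrStat_sub_one_sq_mul_studentPdf hk)
    (integrable_sq_sub_one_sq_mul_studentPdf (ν := k - 1) (by linarith)) fun t =>
      mul_le_mul_of_nonneg_right (corrStat_sub_one_sq_le (by linarith) (sq_nonneg t))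
        (studentPdf_pos (by linarith) t).le

lemma integral_sq_sub_one_sq_sub_integral_corrStat_le (hk : 7 < k) :
    (∫ t, (t ^ 2 - 1) ^ 2 * studentPdf (k - 1) t) -
        ∫ t, (corrStat k (t ^ 2) - 1) ^ 2 * studentPdf (k - 1) t ≤
      2 / (k - 1) * ((∫ t, t ^ 6 * studentPdf (k - 1) t) + ∫ t, t ^ 2 * studentPdf (k - 1) t) := by
  have hpos : 0 < k - 1 := by linarith
  have h2 := integrable_pow_mul_studentPdf hpos (n := 2) (by norm_num; linarith)
  have h6 := integrable_pow_mul_studentPdf hpos (n := 6) (by norm_num; linarith)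
  have hmain := integrable_sq_sub_one_sq_mul_studentPdf (ν := k - 1) (by linarith)
  have hstat := integrable_corrStat_sub_one_sq_mul_studentPdf (k := k) (by linarith)
  rw [← integral_sub hmain hstat, ← integral_add h6 h2, ← integral_const_mul]
  refine integral_mono (hmain.sub hstat) ((h6.add h2).const_mul _) fun t => ?_
  have := mul_le_mul_of_nonneg_right
    (sub_one_sq_sub_corrStat_sub_one_sq_le (by linarith) (sq_nonneg t)) (studentPdf_pos hpos t).le
  linear_combination this

theorem abs_integral_corrStat_sub_one_sq_mul_studentPdf_sub_two_le (hk : 10 ≤ k)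
    (h0 : ∫ t, studentPdf (k - 1) t = 1) :
    |(∫ t, (corrStat k (t ^ 2) - 1) ^ 2 * studentPdf (k - 1) t) - 2| ≤ 400 / k := by
  have hupper := integral_corrStat_sub_one_sq_mul_studentPdf_le (k := k) (by linarith)
  have hlower := integral_sq_sub_one_sq_sub_integral_corrStat_le (k := k) (by linarith)
  rw [integral_sq_sub_one_sq_mul_studentPdf h0 (by linarith)] at hupper hlower
  set ν := k - 1 with hνk
  have hν : 9 ≤ ν := by linarith
  have hm2 : ∫ t, t ^ 2 * studentPdf ν t ≤ 2 := by
    rw [integral_sq_mul_studentPdf h0 (by linarith), div_le_iff₀ (by linarith)]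
    linarith
  have hm6 : ∫ t, t ^ 6 * studentPdf ν t ≤ 120 := by
    have hden : 0 < (ν - 2) * (ν - 4) * (ν - 6) :=
      mul_pos (mul_pos (by linarith) (by linarith)) (by linarith)
    rw [integral_pow_six_mul_studentPdf h0 (by linarith), div_le_iff₀ hden]
    nlinarith [sq_nonneg (ν - 9)]
  have hcentral_nonneg : 0 ≤ (14 * ν - 8) / ((ν - 2) * (ν - 4)) := by
    apply div_nonneg <;> nlinarith
  have hcentral_le : (14 * ν - 8) / ((ν - 2) * (ν - 4)) ≤ 40 / ν := by
    rw [div_le_div_iff₀ (by nlinarith) (by linarith)]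
    nlinarith
  have herror_le : 2 / ν * ((∫ t, t ^ 6 * studentPdf ν t) + ∫ t, t ^ 2 * studentPdf ν t) ≤
      2 / ν * 122 :=
    mul_le_mul_of_nonneg_left (by linarith) (by positivity)
  have htotal : 2 / ν * 122 + 40 / ν ≤ 400 / k := by
    rw [show 2 / ν * 122 + 40 / ν = 284 / ν by ring, div_le_div_iff₀ (by linarith) (by linarith)]
    linarith
  have : 0 ≤ 40 / ν := by positivity
  rw [abs_le]
  constructor <;> linarith

end CorrStatIntegral

theorem stmt_3 :
    ∃ K : ℝ, 0 < K ∧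
      ∀ (k : ℕ), 9 < k →
        ∀ (Ω : Type) (_ : MeasureSpace Ω) (_ : IsProbabilityMeasure (ℙ : Measure Ω))
          (T : Ω → ℝ),
          Integrable (fun ω => (T ω) ^ 2) ℙ →
          HasStudentTDist T ((k : ℝ) - 1) →
          |(∫ ω, ((T ω) ^ 2 / (1 + ((T ω) ^ 2 - 1) / (k : ℝ)) - 1) ^ 2 ∂ℙ) - 2| ≤ K / k := by
  refine ⟨400, by norm_num, fun k hk Ω _ _ T _ hT => ?_⟩
  have hk10 : (10 : ℝ) ≤ k := by exact_mod_cast hk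
  have hν : (0 : ℝ) < k - 1 := by linarith
  change |(∫ ω, (corrStat k (T ω ^ 2) - 1) ^ 2) - 2| ≤ _
  rw [hT.integral_comp hν (g := fun x => (corrStat k (x ^ 2) - 1) ^ 2)
    (by unfold corrStat; fun_prop)]
  exact abs_integral_corrStat_sub_one_sq_mul_studentPdf_sub_two_le hk10
    (hT.integral_studentPdf hν)
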